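/- Let q = 2^h and let T be the alternating trilinear form on V = GF(q)^7 with trivector t = f_{124} + f_{235} + f_{346} + f_{457} + f_{561} + f_{672} + f_{713}. Then every T-singular line of PG(6,q) lies in the hyperplane with equation x₁ + x₂ + ⋯ + x₇ = 0; that is, if span{a,b} is a T-singular line, then Σᵢ aᵢ = 0 and Σᵢ bᵢ = 0. -/

import Mathlib

/-!
The trivector `t` is the octonionic 3-form: `T(a, b, x) = (a × b) ⬝ x` for the seven-dimensional
cross product `×` whose oriented Fano lines are `(i, i + 1, i + 3)`. A line `⟨a, b⟩` is
`T`-singular exactly when `a × b = 0`, and the identity `a × (a × b) = (a ⬝ b) a - (a ⬝ a) b`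
together with linear independence forces `a ⬝ a = b ⬝ b = 0`. In characteristic `2`,
`a ⬝ a = ∑ aᵢ² = (∑ aᵢ)²`.
-/

open Matrix

theorem Module.Basis.ext_alternating_of_strictMono {ι R M N : Type*} [LinearOrder ι]
    [CommRing R] [AddCommGroup M] [Module R M] [AddCommGroup N] [Module R N] {n : ℕ}
    {f g : M [⋀^Fin n]→ₗ[R] N} (e : Module.Basis ι R M)
    (h : ∀ v : Fin n → ι, StrictMono v → f (e ∘ v) = g (e ∘ v)) : f = g := by
  refine e.ext_alternating fun v hv => ?_
  let σ := Tuple.sort v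
  have hsorted : StrictMono (v ∘ σ) :=
    (Tuple.monotone_sort v).strictMono_of_injective (hv.comp σ.injective)
  have hperm := h _ hsorted
  rw [← Function.comp_assoc, f.map_perm, g.map_perm, smul_left_cancel_iff] at hperm
  exact hperm

theorem two_eq_zero_of_card_eq_two_pow {F : Type*} [Field F] [Fintype F] {h : ℕ}
    (hcard : Fintype.card F = 2 ^ h) : (2 : F) = 0 := by
  have hpow : (2 : F) ^ h = 0 := by exact_mod_cast hcard ▸ FiniteField.cast_card_eq_zero F
  exact (pow_eq_zero_iff'.mp hpow).1

theorem sum_eq_zero_of_dotProduct_self_eq_zero {ι R : Type*} [Fintype ι] [CommRing R] [IsReduced R]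
    [CharP R 2] {a : ι → R} (h : a ⬝ᵥ a = 0) : ∑ i, a i = 0 := by
  have hsq : (∑ i, a i) ^ 2 = 0 := by
    rw [sum_pow_char, ← h, dotProduct]
    simp only [sq]
  exact (pow_eq_zero_iff two_ne_zero).mp hsq

section Cross7

variable {R : Type*} [CommRing R]

def cross7 (a b : Fin 7 → R) (k : Fin 7) : R :=
  a (k + 1) * b (k + 3) - a (k + 3) * b (k + 1) + a (k + 2) * b (k + 6) - a (k + 6) * b (k + 2) +
    a (k + 4) * b (k + 5) - a (k + 5) * b (k + 4)

theorem cross7_anticomm (a b : Fin 7 → R) : cross7 b a = -cross7 a b := by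
  funext k
  simp only [cross7, Pi.neg_apply]
  ring

theorem cross7_cross7_self (a b : Fin 7 → R) :
    cross7 a (cross7 a b) = (a ⬝ᵥ b) • a - (a ⬝ᵥ a) • b := by
  funext k
  fin_cases k <;>
    simp only [cross7, dotProduct, Fin.sum_univ_seven, Pi.sub_apply, Pi.smul_apply, smul_eq_mul,
      Fin.zero_eta, Fin.mk_one, Fin.reduceFinMk, Fin.isValue, Fin.reduceAdd, zero_add] <;>
    ring

theorem dotProduct_self_eq_zero_of_cross7_eq_zero {a b : Fin 7 → R}
    (hab : LinearIndependent R ![a, b]) (h : cross7 a b = 0) : a ⬝ᵥ a = 0 := by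
  have hcomb : (a ⬝ᵥ b) • a + (-(a ⬝ᵥ a)) • b = 0 := by
    rw [neg_smul, ← sub_eq_add_neg, ← cross7_cross7_self, h]
    funext k
    simp [cross7]
  exact neg_eq_zero.mp (LinearIndependent.pair_iff.mp hab _ _ hcomb).2

theorem cross7_single_single_of_lt {i j k : Fin 7} (hij : i < j) (hjk : j < k) :
    cross7 (Pi.single i (1 : R)) (Pi.single j 1) k =
      if ((i : ℕ), (j : ℕ), (k : ℕ)) ∈
          [((0:ℕ), (1:ℕ), (3:ℕ)), (1, 2, 4), (2, 3, 5), (3, 4, 6),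
            (0, 4, 5), (1, 5, 6), (0, 2, 6)] then 1 else 0 := by
  fin_cases i <;> fin_cases j <;> fin_cases k <;> simp_all [cross7]

def minor3 (i j k : Fin 7) : (Fin 7 → R) [⋀^Fin 3]→ₗ[R] R :=
  detRowAlternating.compLinearMap (LinearMap.funLeft R R ![i, j, k])

def fanoForm : (Fin 7 → R) [⋀^Fin 3]→ₗ[R] R :=
  ∑ i : Fin 7, minor3 i (i + 1) (i + 3)

theorem fanoForm_apply (a b x : Fin 7 → R) : fanoForm ![a, b, x] = cross7 a b ⬝ᵥ x := by
  have hdet (M : Fin 3 → Fin 3 → R) : detRowAlternating M = (of M).det := rfl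
  simp only [fanoForm, minor3, Fin.isValue, Fin.sum_univ_seven, zero_add, Fin.reduceAdd,
    AlternatingMap.add_apply, AlternatingMap.compLinearMap_apply, hdet, det_fin_three, of_apply,
    cons_val_zero, LinearMap.funLeft_apply, cons_val_one, cons_val, dotProduct, cross7]
  ring

theorem eq_fanoForm (T : (Fin 7 → R) [⋀^Fin 3]→ₗ[R] R)
    (hT : ∀ i j k : Fin 7, i < j → j < k →
      T ![Pi.single i 1, Pi.single j 1, Pi.single k 1] =
        if ((i : ℕ), (j : ℕ), (k : ℕ)) ∈
            [((0:ℕ), (1:ℕ), (3:ℕ)), (1, 2, 4), (2, 3, 5), (3, 4, 6),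
              (0, 4, 5), (1, 5, 6), (0, 2, 6)] then 1 else 0) :
    T = fanoForm := by
  refine (Pi.basisFun R (Fin 7)).ext_alternating_of_strictMono fun v hv => ?_
  have hbasis : Pi.basisFun R (Fin 7) ∘ v =
      ![Pi.single (v 0) 1, Pi.single (v 1) 1, Pi.single (v 2) 1] := by
    funext r
    fin_cases r <;> simp
  have h01 : v 0 < v 1 := hv (by decide)
  have h12 : v 1 < v 2 := hv (by decide)
  rw [hbasis, hT _ _ _ h01 h12, fanoForm_apply, dotProduct_single, mul_one,
    cross7_single_single_of_lt h01 h12]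

end Cross7

theorem stmt_17_general (h : ℕ) (F : Type*) [Field F] [Fintype F]
    (hcard : Fintype.card F = 2 ^ h)
    (T : AlternatingMap F (Fin 7 → F) F (Fin 3))
    (hT : ∀ i j k : Fin 7, i < j → j < k →
      T ![Pi.single i 1, Pi.single j 1, Pi.single k 1] =
        if ((i : ℕ), (j : ℕ), (k : ℕ)) ∈
            [((0:ℕ), (1:ℕ), (3:ℕ)), (1, 2, 4), (2, 3, 5), (3, 4, 6),
              (0, 4, 5), (1, 5, 6), (0, 2, 6)] then 1 else 0) :
    ∀ a b : Fin 7 → F, LinearIndependent F ![a, b] →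
      (∀ x, T ![a, b, x] = 0) →
        (∑ i, a i = 0 ∧ ∑ i, b i = 0) := by
  intro a b hab hsing
  have : CharP F 2 := CharTwo.of_one_ne_zero_of_two_eq_zero one_ne_zero
    (two_eq_zero_of_card_eq_two_pow hcard)
  have hab_zero : cross7 a b = 0 :=
    dotProduct_eq_zero _ fun x => by rw [← fanoForm_apply, ← eq_fanoForm T hT, hsing]
  have hba_zero : cross7 b a = 0 := by rw [cross7_anticomm, hab_zero, neg_zero]
  exact ⟨sum_eq_zero_of_dotProduct_self_eq_zero
      (dotProduct_self_eq_zero_of_cross7_eq_zero hab hab_zero),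
    sum_eq_zero_of_dotProduct_self_eq_zero
      (dotProduct_self_eq_zero_of_cross7_eq_zero (LinearIndependent.pair_symm_iff.mp hab) hba_zero)⟩

/-- Over `GF(2^h)`, for the form on `F⁷` with trivector
`t = f₁₂₄ + f₂₃₅ + f₃₄₆ + f₄₅₇ + f₅₆₁ + f₆₇₂ + f₇₁₃`, every `T`-singular line
lies in the hyperplane `x₁ + ⋯ + x₇ = 0`. (0-based indices.) -/
theorem stmt_17 (h : ℕ) (hpos : 0 < h) (F : Type*) [Field F] [Fintype F]
    (hcard : Fintype.card F = 2 ^ h)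
    (T : AlternatingMap F (Fin 7 → F) F (Fin 3))
    (hT : ∀ i j k : Fin 7, i < j → j < k →
      T ![Pi.single i 1, Pi.single j 1, Pi.single k 1] =
        if ((i : ℕ), (j : ℕ), (k : ℕ)) ∈
            [((0:ℕ), (1:ℕ), (3:ℕ)), (1, 2, 4), (2, 3, 5), (3, 4, 6),
              (0, 4, 5), (1, 5, 6), (0, 2, 6)] then 1 else 0) :
    ∀ a b : Fin 7 → F, LinearIndependent F ![a, b] →
      (∀ x, T ![a, b, x] = 0) →
        (∑ i, a i = 0 ∧ ∑ i, b i = 0) :=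
  stmt_17_general h F hcard T hT
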